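/- Let ρ be a 2×2 density matrix with Bloch vector b (so ρ = (I + b·σ)/2 with |b|₂ ≤ 1, where σ = (σ₁,σ₂,σ₃) are the Pauli matrices). Then Σ_{j=1}^{3} ‖σ_j √ρ − √ρ σ_j‖²_HS = 4(1 − √(1 − |b|₂²)). -/

import Mathlib

open Matrix
open scoped ComplexOrder

noncomputable def pauli : Fin 3 → Matrix (Fin 2) (Fin 2) ℂ
  | 0 => !![0, 1; 1, 0]
  | 1 => !![0, -Complex.I; Complex.I, 0]
  | 2 => !![1, 0; 0, -1]
/-- The positive semidefinite square root, as `Matrix.PosSemidef.sqrt` was defined in Mathlib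
(Dec 2024); it has since been removed from Mathlib. -/
noncomputable def Matrix.PosSemidef.sqrt {n : Type*} [Fintype n] [DecidableEq n]
    {A : Matrix n n ℂ} (hA : A.PosSemidef) : Matrix n n ℂ :=
  hA.1.eigenvectorUnitary.1 * diagonal ((↑) ∘ Real.sqrt ∘ hA.1.eigenvalues) *
    (star hA.1.eigenvectorUnitary : Matrix n n ℂ)
lemma Matrix.PosSemidef.posSemidef_sqrt {n : Type*} [Fintype n] [DecidableEq n] {A : Matrix n n ℂ} (hA : A.PosSemidef) :
    hA.sqrt.PosSemidef := by
  unfold Matrix.PosSemidef.sqrt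
  rw [star_eq_conjTranspose]
  refine PosSemidef.mul_mul_conjTranspose_same ?_ _
  rw [posSemidef_diagonal_iff]
  intro i
  simp [Complex.zero_le_real, Real.sqrt_nonneg]
lemma Matrix.PosSemidef.sqrt_mul_self {n : Type*} [Fintype n] [DecidableEq n] {A : Matrix n n ℂ} (hA : A.PosSemidef) :
    hA.sqrt * hA.sqrt = A := by
  unfold Matrix.PosSemidef.sqrt
  have hU : (star hA.1.eigenvectorUnitary : Matrix n n ℂ) * hA.1.eigenvectorUnitary.1 = 1 :=
    Unitary.star_mul_self_of_mem hA.1.eigenvectorUnitary.2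
  have h2 : diagonal ((↑) ∘ Real.sqrt ∘ hA.1.eigenvalues) * diagonal ((↑) ∘ Real.sqrt ∘ hA.1.eigenvalues)
      = diagonal (RCLike.ofReal ∘ hA.1.eigenvalues : n → ℂ) := by
    rw [diagonal_mul_diagonal]
    congr 1; funext i
    simp only [Function.comp_apply]
    rw [← Complex.ofReal_mul, Real.mul_self_sqrt (hA.eigenvalues_nonneg i)]; rfl
  conv_rhs => rw [hA.1.spectral_theorem]
  rw [Unitary.conjStarAlgAut_apply]
  calc _ = hA.1.eigenvectorUnitary.1 * diagonal ((↑) ∘ Real.sqrt ∘ hA.1.eigenvalues) *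
      ((star hA.1.eigenvectorUnitary : Matrix n n ℂ) * hA.1.eigenvectorUnitary.1) *
      diagonal ((↑) ∘ Real.sqrt ∘ hA.1.eigenvalues) * (star hA.1.eigenvectorUnitary : Matrix n n ℂ) := by
        simp only [Matrix.mul_assoc]
    _ = _ := by rw [hU, Matrix.mul_one, Matrix.mul_assoc _ (diagonal _) (diagonal _), h2]

lemma key_sum (S : Matrix (Fin 2) (Fin 2) ℂ) (hH : Sᴴ = S) :
    ∑ j : Fin 3, ((pauli j * S - S * pauli j)ᴴ * (pauli j * S - S * pauli j)).trace
      = 8 * (S * S).trace - 4 * S.trace ^ 2 := by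
  have hc : ∀ i j, (starRingEnd ℂ) (S j i) = S i j := fun i j => congrFun (congrFun hH i) j
  simp only [Fin.sum_univ_three, pauli, trace_fin_two, mul_apply, Matrix.sub_apply,
    conjTranspose_apply, Fin.sum_univ_two, of_apply, cons_val', cons_val_zero, cons_val_one,
    head_cons, head_fin_const, empty_val', cons_val_fin_one, Complex.star_def, map_add,
    RingHom.map_mul, map_sub, _root_.map_one, map_zero, Complex.conj_I, map_neg]
  simp only [hc]
  ring_nf
  rw [Complex.I_sq]
  ring

/-- For a qubit density matrix `ρ = (I + b·σ)/2` with Bloch vector `b`, `|b|₂ ≤ 1`,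
`Σⱼ ‖σⱼ√ρ − √ρσⱼ‖²_HS = 4(1 − √(1 − |b|₂²))`, the squared Hilbert–Schmidt norm
of `M` being `tr(MᴴM)`. -/
theorem stmt_10 (b : Fin 3 → ℝ) (hb : ∑ i, (b i) ^ 2 ≤ 1)
    (ρ : Matrix (Fin 2) (Fin 2) ℂ) (hρ : ρ.PosSemidef)
    (hBloch : ρ = ((2 : ℂ)⁻¹) • ((1 : Matrix (Fin 2) (Fin 2) ℂ)
      + ∑ i, (b i : ℂ) • pauli i)) :
    ∑ j : Fin 3, (((pauli j * hρ.sqrt - hρ.sqrt * pauli j)ᴴ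
        * (pauli j * hρ.sqrt - hρ.sqrt * pauli j)).trace).re
      = 4 * (1 - Real.sqrt (1 - ∑ i, (b i) ^ 2)) := by
  set S := hρ.sqrt with hSdef
  have hS : S.PosSemidef := hρ.posSemidef_sqrt
  have hH : Sᴴ = S := hS.1
  have hSS : S * S = ρ := hρ.sqrt_mul_self
  -- trace of ρ
  have htr : ρ.trace = 1 := by
    subst hBloch
    simp [trace_fin_two, Fin.sum_univ_three, pauli, Fin.sum_univ_two]
  -- det of ρ
  have hdet : ρ.det = ((1 - ∑ i, (b i)^2 : ℝ) : ℂ) / 4 := by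
    subst hBloch
    simp [det_fin_two, Fin.sum_univ_three, pauli, Fin.sum_univ_two]
    push_cast
    ring_nf
    rw [Complex.I_sq]
    ring
  -- Cayley-Hamilton trace identity for 2x2
  have hCH : S.trace ^ 2 = (S * S).trace + 2 * S.det := by
    simp [trace_fin_two, det_fin_two, mul_apply, Fin.sum_univ_two]
    ring
  -- det S is a nonnegative real
  obtain ⟨d, hd0, hd⟩ : ∃ d : ℝ, 0 ≤ d ∧ S.det = (d : ℂ) := by
    refine ⟨∏ i, hS.1.eigenvalues i, Finset.prod_nonneg fun i _ => hS.eigenvalues_nonneg i, ?_⟩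
    rw [hS.1.det_eq_prod_eigenvalues]
    push_cast
    rfl
  have hd2 : d ^ 2 = (1 - ∑ i, (b i)^2) / 4 := by
    have : ((d : ℂ))^2 = ((1 - ∑ i, (b i)^2 : ℝ) : ℂ) / 4 := by
      rw [← hd, ← hdet, ← hSS, det_mul, sq]
    exact_mod_cast this
  have hsqrt : Real.sqrt (1 - ∑ i, (b i)^2) = 2 * d := by
    have h4 : (2 * d) ^ 2 = 1 - ∑ i, (b i)^2 := by rw [mul_pow]; rw [hd2]; ring
    rw [← h4, Real.sqrt_sq (by positivity)]
  have hkey := key_sum S hH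
  rw [hSS, htr, hCH, hSS, htr, hd] at hkey
  calc ∑ j : Fin 3, (((pauli j * S - S * pauli j)ᴴ * (pauli j * S - S * pauli j)).trace).re
      = (∑ j : Fin 3, ((pauli j * S - S * pauli j)ᴴ * (pauli j * S - S * pauli j)).trace).re := by
        rw [Complex.re_sum]
    _ = (8 * (1:ℂ) - 4 * (1 + 2 * (d:ℂ))).re := by rw [hkey]
    _ = 4 - 8 * d := by simp; ring
    _ = 4 * (1 - Real.sqrt (1 - ∑ i, (b i)^2)) := by rw [hsqrt]; ring
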